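/- arXiv:2603.06752 — 2 statements merged into one kernel-verified Lean document; each statement's English description precedes it below -/
import Mathlib

section
/- For any 0 < ε < 1, there exist a ReLU network Ẽ : ℝ^D → ℝ^n, a matrix Ã ∈ ℝ^{n×n} with spectral norm ‖Ã‖₂ ≤ ρ, and a ReLU network D̃ : ℝ^n → ℝ^D such that sup_{x∈M} ‖D̃(Ã Ẽ(x)) − F(x)‖_∞ ≤ ε. -/
noncomputable section

/-- Euclidean (ℓ²) norm of a vector in `ℝ^d`. -/
def l2 {d : ℕ} (x : Fin d → ℝ) : ℝ := Real.sqrt (∑ i, (x i) ^ 2)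

/-- Spectral norm (operator norm induced by Euclidean norms) of a square matrix. -/
def specNorm {n : ℕ} (A : Matrix (Fin n) (Fin n) ℝ) : ℝ :=
  ⨆ v : {v : Fin n → ℝ // l2 v ≤ 1}, l2 (A.mulVec v)

/-- Entrywise ReLU activation. -/
def reluVec {d : ℕ} (x : Fin d → ℝ) : Fin d → ℝ := fun i => max (x i) 0

/-- A feedforward ReLU neural network with input dimension `d₁` and output dimension `d₂`:
a list of affine layers, with the ReLU activation applied after every layer but the last,
computing `x ↦ W_L σ(W_{L−1} ⋯ σ(W_1 x + b_1) ⋯ + b_{L−1}) + b_L`. -/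
inductive ReluNet : ℕ → ℕ → Type
  | last {d₁ d₂ : ℕ} (W : Matrix (Fin d₂) (Fin d₁) ℝ) (b : Fin d₂ → ℝ) : ReluNet d₁ d₂
  | cons {d₁ d d₂ : ℕ} (W : Matrix (Fin d) (Fin d₁) ℝ) (b : Fin d → ℝ)
      (tail : ReluNet d d₂) : ReluNet d₁ d₂

/-- The function computed by a ReLU network. -/
def ReluNet.eval : {d₁ d₂ : ℕ} → ReluNet d₁ d₂ → (Fin d₁ → ℝ) → Fin d₂ → ℝ
  | _, _, last W b, x => W.mulVec x + b
  | _, _, cons W b t, x => t.eval (reluVec (W.mulVec x + b))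


/-! One can take `Ã = A*`. Maps computed by ReLU networks are closed under composition and
concatenation (a hidden layer carries a vector `y` along as `relu y` and `relu (-y)`), hence
under `⊔`, since `max u v = v + relu (u - v)`. So for an `L`-Lipschitz `f` and a finite `δ`-net
`S` of a compact set, the McShane-type approximant `x ↦ max_{p ∈ S} (f p - L ‖x - p‖₁)` is a
ReLU network, and it lies within `L (d + 1) δ` of `f` on the set. Taking `Ẽ ≈ φ` on `M` and
`D̃ ≈ ψ` on the compact set `Ã Ẽ(M)`, the error at `x ∈ M` is at most the decoder error plus
the Lipschitz constant of `ψ ∘ A*` times the encoder error. -/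

open Matrix

def ReluRealizable {d e : ℕ} (f : (Fin d → ℝ) → Fin e → ℝ) : Prop :=
  ∃ N : ReluNet d e, N.eval = f

lemma reluVec_append {a b : ℕ} (u : Fin a → ℝ) (v : Fin b → ℝ) :
    reluVec (Fin.append u v) = Fin.append (reluVec u) (reluVec v) := by
  funext i
  refine Fin.addCases (fun i => ?_) (fun i => ?_) i <;> simp [reluVec]

lemma Fin.append_add_append {α : Type*} [Add α] {a b : ℕ} (u u' : Fin a → α)
    (v v' : Fin b → α) :
    Fin.append u v + Fin.append u' v' = Fin.append (u + u') (v + v') := by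
  funext i
  refine Fin.addCases (fun i => ?_) (fun i => ?_) i <;> simp

def LinearMap.finAppend {R V W : Type*} [Semiring R] [AddCommMonoid V] [Module R V]
    [AddCommMonoid W] [Module R W] {a b : ℕ} (ℓ₁ : V →ₗ[R] Fin a → W) (ℓ₂ : V →ₗ[R] Fin b → W) :
    V →ₗ[R] Fin (a + b) → W where
  toFun x := Fin.append (ℓ₁ x) (ℓ₂ x)
  map_add' x y := by simp only [map_add, Fin.append_add_append]
  map_smul' c x := by
    funext i
    refine Fin.addCases (fun i => ?_) (fun i => ?_) i <;> simp

@[simp]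
lemma LinearMap.finAppend_apply {R V W : Type*} [Semiring R] [AddCommMonoid V] [Module R V]
    [AddCommMonoid W] [Module R W] {a b : ℕ} (ℓ₁ : V →ₗ[R] Fin a → W) (ℓ₂ : V →ₗ[R] Fin b → W)
    (x : V) :
    LinearMap.finAppend ℓ₁ ℓ₂ x = Fin.append (ℓ₁ x) (ℓ₂ x) := rfl

namespace ReluRealizable

variable {c d e m : ℕ}

lemma affine (W : Matrix (Fin e) (Fin d) ℝ) (b : Fin e → ℝ) :
    ReluRealizable fun x => W *ᵥ x + b :=
  ⟨.last W b, rfl⟩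

lemma linearMap_add_const (ℓ : (Fin d → ℝ) →ₗ[ℝ] Fin e → ℝ) (b : Fin e → ℝ) :
    ReluRealizable fun x => ℓ x + b := by
  simpa only [LinearMap.toMatrix'_mulVec] using affine (LinearMap.toMatrix' ℓ) b

lemma linearMap (ℓ : (Fin d → ℝ) →ₗ[ℝ] Fin e → ℝ) : ReluRealizable ℓ := by
  simpa using linearMap_add_const ℓ 0

lemma comp_relu_affine {f : (Fin e → ℝ) → Fin c → ℝ} (hf : ReluRealizable f)
    (W : Matrix (Fin e) (Fin d) ℝ) (b : Fin e → ℝ) :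
    ReluRealizable fun x => f (reluVec (W *ᵥ x + b)) := by
  obtain ⟨N, rfl⟩ := hf
  exact ⟨.cons W b N, rfl⟩

lemma comp_affine {f : (Fin e → ℝ) → Fin c → ℝ} (hf : ReluRealizable f)
    (W : Matrix (Fin e) (Fin d) ℝ) (b : Fin e → ℝ) :
    ReluRealizable fun x => f (W *ᵥ x + b) := by
  obtain ⟨N, rfl⟩ := hf
  cases N with
  | last W' b' =>
    refine ⟨.last (W' * W) (W' *ᵥ b + b'), funext fun x => ?_⟩
    simp [ReluNet.eval, Matrix.mulVec_add, Matrix.mulVec_mulVec, add_assoc]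
  | cons W' b' t =>
    refine ⟨.cons (W' * W) (W' *ᵥ b + b') t, funext fun x => ?_⟩
    simp [ReluNet.eval, Matrix.mulVec_add, Matrix.mulVec_mulVec, add_assoc]

lemma comp_eval {f : (Fin e → ℝ) → Fin c → ℝ} (hf : ReluRealizable f) (N : ReluNet d e) :
    ReluRealizable (f ∘ N.eval) := by
  induction N with
  | last W b => exact comp_affine hf W b
  | cons W b t ih => exact comp_relu_affine (ih hf) W b

lemma comp {f : (Fin e → ℝ) → Fin c → ℝ} {g : (Fin d → ℝ) → Fin e → ℝ}
    (hf : ReluRealizable f) (hg : ReluRealizable g) : ReluRealizable (f ∘ g) := by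
  obtain ⟨N, rfl⟩ := hg
  exact hf.comp_eval N

lemma append_comp_linearMap (N : ReluNet d e) (π : (Fin m → ℝ) →ₗ[ℝ] Fin d → ℝ)
    (ℓ : (Fin m → ℝ) →ₗ[ℝ] Fin c → ℝ) :
    ReluRealizable fun y => Fin.append (N.eval (π y)) (ℓ y) := by
  induction N generalizing m c with
  | last W b =>
    convert linearMap_add_const (.finAppend (Matrix.toLin' W ∘ₗ π) ℓ) (Fin.append b 0) using 2
    simp [ReluNet.eval, Fin.append_add_append]
  | @cons _ d' _ W b t ih =>
    let A : (Fin m → ℝ) →ₗ[ℝ] Fin (m + m + d') → ℝ :=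
      .finAppend (.finAppend .id (-.id)) (Matrix.toLin' W ∘ₗ π)
    let π' : (Fin (m + m + d') → ℝ) →ₗ[ℝ] Fin d' → ℝ := LinearMap.funLeft ℝ ℝ (Fin.natAdd _)
    let ℓ' : (Fin (m + m + d') → ℝ) →ₗ[ℝ] Fin c → ℝ :=
      ℓ ∘ₗ (LinearMap.funLeft ℝ ℝ (fun i => Fin.castAdd d' (Fin.castAdd m i)) -
        LinearMap.funLeft ℝ ℝ (fun i => Fin.castAdd d' (Fin.natAdd m i)))
    convert comp_relu_affine (ih π' ℓ') (LinearMap.toMatrix' A) (Fin.append 0 b) using 2 with y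
    have hlayer : reluVec (LinearMap.toMatrix' A *ᵥ y + Fin.append 0 b) =
        Fin.append (Fin.append (reluVec y) (reluVec (-y))) (reluVec (W *ᵥ π y + b)) := by
      simp [A, Fin.append_add_append, reluVec_append]
    have hℓ : ℓ' (Fin.append (Fin.append (reluVec y) (reluVec (-y))) (reluVec (W *ᵥ π y + b)))
        = ℓ y := by
      simp only [ℓ', LinearMap.comp_apply]
      congr 1
      funext i
      simp only [LinearMap.sub_apply, LinearMap.funLeft_apply, Pi.sub_apply, Fin.append_left,
        Fin.append_right, reluVec, Pi.neg_apply, max_zero_sub_max_neg_zero_eq_self]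
    have hπ : π' (Fin.append (Fin.append (reluVec y) (reluVec (-y))) (reluVec (W *ᵥ π y + b)))
        = reluVec (W *ᵥ π y + b) := by
      funext i
      simp [π']
    simp only [hlayer, hℓ, hπ, ReluNet.eval]

lemma append {f : (Fin d → ℝ) → Fin c → ℝ} {g : (Fin d → ℝ) → Fin e → ℝ}
    (hf : ReluRealizable f) (hg : ReluRealizable g) :
    ReluRealizable fun x => Fin.append (f x) (g x) := by
  obtain ⟨N, rfl⟩ := hf
  obtain ⟨G, rfl⟩ := hg
  convert (append_comp_linearMap N (LinearMap.funLeft ℝ ℝ (Fin.natAdd e))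
    (LinearMap.funLeft ℝ ℝ (Fin.castAdd d))).comp
      (append_comp_linearMap G .id .id) using 2 with x
  congr 2 <;> funext i <;> simp

lemma add {f g : (Fin d → ℝ) → Fin e → ℝ} (hf : ReluRealizable f) (hg : ReluRealizable g) :
    ReluRealizable (f + g) := by
  convert (linearMap (LinearMap.funLeft ℝ ℝ (Fin.castAdd e) +
    LinearMap.funLeft ℝ ℝ (Fin.natAdd e))).comp (hf.append hg) using 1
  funext x i
  simp only [Pi.add_apply, Function.comp_apply, LinearMap.add_apply, LinearMap.funLeft_apply,
    Fin.append_left, Fin.append_right]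

lemma sub {f g : (Fin d → ℝ) → Fin e → ℝ} (hf : ReluRealizable f) (hg : ReluRealizable g) :
    ReluRealizable (f - g) := by
  convert (linearMap (LinearMap.funLeft ℝ ℝ (Fin.castAdd e) -
    LinearMap.funLeft ℝ ℝ (Fin.natAdd e))).comp (hf.append hg) using 1
  funext x i
  simp only [Pi.sub_apply, Function.comp_apply, LinearMap.sub_apply, LinearMap.funLeft_apply,
    Fin.append_left, Fin.append_right]

lemma relu {f : (Fin d → ℝ) → Fin e → ℝ} (hf : ReluRealizable f) :
    ReluRealizable fun x => reluVec (f x) := by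
  have hrelu : ReluRealizable (reluVec : (Fin e → ℝ) → Fin e → ℝ) :=
    ⟨.cons (1 : Matrix (Fin e) (Fin e) ℝ) 0 (.last 1 0), funext fun x => by simp [ReluNet.eval]⟩
  exact hrelu.comp hf

lemma sup {f g : (Fin d → ℝ) → Fin e → ℝ} (hf : ReluRealizable f) (hg : ReluRealizable g) :
    ReluRealizable (f ⊔ g) := by
  convert (hf.sub hg).relu.add hg using 1
  funext x i
  simp only [Pi.sup_apply, Pi.add_apply, Pi.sub_apply, reluVec]
  rw [← max_add_add_right, sub_add_cancel, zero_add]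

lemma finset_sup' {ι : Type*} {s : Finset ι} (hs : s.Nonempty)
    {f : ι → (Fin d → ℝ) → Fin e → ℝ} (hf : ∀ i ∈ s, ReluRealizable (f i)) :
    ReluRealizable (s.sup' hs f) :=
  Finset.sup'_induction hs f (fun _ h₁ _ h₂ => h₁.sup h₂) hf

lemma const_sub_mul_sum_abs_sub (a : Fin e → ℝ) (L : ℝ) (p : Fin d → ℝ) :
    ReluRealizable fun x k => a k - L * ∑ i, |x i - p i| := by
  have habs : ReluRealizable fun x => reluVec (x - p) + reluVec (p - x) := by
    convert (affine (1 : Matrix (Fin d) (Fin d) ℝ) (-p)).relu.add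
      (affine (-1 : Matrix (Fin d) (Fin d) ℝ) p).relu using 1
    funext x
    simp [Matrix.neg_mulVec, sub_eq_add_neg, add_comm]
  convert (affine (Matrix.of fun (_ : Fin e) (_ : Fin d) => -L) a).comp habs using 1
  funext x k
  have habs_apply (i : Fin d) : (reluVec (x - p) + reluVec (p - x)) i = |x i - p i| := by
    simp only [Pi.add_apply, reluVec, Pi.sub_apply]
    rw [← neg_sub (x i), max_zero_add_max_neg_zero_eq_abs_self]
  simp only [Function.comp_apply, Pi.add_apply, Matrix.mulVec, dotProduct, Matrix.of_apply,
    habs_apply, neg_mul, Finset.sum_neg_distrib, Finset.mul_sum]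
  ring

end ReluRealizable

lemma norm_le_sum_abs {d : ℕ} (v : Fin d → ℝ) : ‖v‖ ≤ ∑ i, |v i| :=
  (pi_norm_le_iff_of_nonneg (by positivity)).2 fun i =>
    (Real.norm_eq_abs (v i)).trans_le <|
      Finset.single_le_sum (f := fun i => |v i|) (fun _ _ => abs_nonneg _) (Finset.mem_univ i)

lemma sum_abs_le_card_mul_norm {d : ℕ} (v : Fin d → ℝ) : ∑ i, |v i| ≤ d * ‖v‖ := by
  simpa [Real.norm_eq_abs] using Pi.sum_norm_apply_le_norm v

theorem exists_reluNet_approx_of_lipschitzOnWith {d e : ℕ} {K : Set (Fin d → ℝ)}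
    (hK : IsCompact K) {f : (Fin d → ℝ) → Fin e → ℝ} {L : NNReal} (hf : LipschitzOnWith L f K)
    {ε : ℝ} (hε : 0 < ε) : ∃ N : ReluNet d e, ∀ x ∈ K, ‖N.eval x - f x‖ ≤ ε := by
  rcases K.eq_empty_or_nonempty with rfl | ⟨x₀, hx₀⟩
  · exact ⟨.last 0 0, by simp⟩
  set δ := ε / (L * (d + 1) + 1) with hδ
  have hδ_pos : 0 < δ := by positivity
  obtain ⟨S, hSK, hSfin, hcover⟩ := finite_cover_balls_of_compact hK hδ_pos
  have hS : hSfin.toFinset.Nonempty := by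
    obtain ⟨p, hp, -⟩ := Set.mem_iUnion₂.1 (hcover hx₀)
    exact ⟨p, hSfin.mem_toFinset.2 hp⟩
  obtain ⟨N, hN⟩ := ReluRealizable.finset_sup' hS
    (fun p _ => ReluRealizable.const_sub_mul_sum_abs_sub (f p) L p)
  refine ⟨N, fun x hx => (pi_norm_le_iff_of_nonneg hε.le).2 fun k => ?_⟩
  have hfk : ∀ p ∈ K, |f x k - f p k| ≤ L * ‖x - p‖ := fun p hp =>
    ((dist_le_pi_dist (f x) (f p) k).trans (hf.dist_le_mul x hx p hp)).trans_eq
      (by rw [dist_eq_norm])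
  rw [hN, Pi.sub_apply, Finset.sup'_apply, Finset.sup'_apply, Real.norm_eq_abs, abs_sub_le_iff]
  constructor
  · refine (sub_nonpos.2 (Finset.sup'_le _ _ fun p hp => ?_)).trans hε.le
    have hpK := hSK (hSfin.mem_toFinset.1 hp)
    have hlip := (abs_sub_le_iff.1 (hfk p hpK)).2
    have hl1 : (L : ℝ) * ‖x - p‖ ≤ L * ∑ i, |x i - p i| :=
      mul_le_mul_of_nonneg_left (by simpa using norm_le_sum_abs (x - p)) L.2
    linarith
  · obtain ⟨p, hp, hball⟩ := Set.mem_iUnion₂.1 (hcover hx)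
    have hxp : ‖x - p‖ ≤ δ := (dist_eq_norm x p ▸ Metric.mem_ball.1 hball).le
    have hlip := (abs_sub_le_iff.1 (hfk p (hSK hp))).1
    have hl1 : ∑ i, |x i - p i| ≤ d * δ := by
      simpa using (sum_abs_le_card_mul_norm (x - p)).trans (by gcongr)
    calc f x k - _ ≤ f x k - (f p k - L * ∑ i, |x i - p i|) :=
          sub_le_sub_left (Finset.le_sup' (fun p => f p k - L * ∑ i, |x i - p i|)
            (hSfin.mem_toFinset.2 hp)) _
      _ = (f x k - f p k) + L * ∑ i, |x i - p i| := by ring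
      _ ≤ L * δ + L * (d * δ) := by gcongr; exact hlip.trans (by gcongr)
      _ = L * (d + 1) * δ := by ring
      _ ≤ (L * (d + 1) + 1) * δ := by gcongr; linarith
      _ = ε := by rw [hδ]; field_simp

lemma continuous_reluVec {d : ℕ} : Continuous (reluVec : (Fin d → ℝ) → Fin d → ℝ) :=
  continuous_pi fun i => (continuous_apply i).max continuous_const

lemma ReluNet.continuous_eval {d e : ℕ} (N : ReluNet d e) : Continuous N.eval := by
  induction N with
  | last W b => exact (continuous_const.matrix_mulVec continuous_id).add continuous_const
  | cons W b t ih =>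
    exact ih.comp <| continuous_reluVec.comp <|
      (continuous_const.matrix_mulVec continuous_id).add continuous_const

lemma norm_le_l2 {d : ℕ} (v : Fin d → ℝ) : ‖v‖ ≤ l2 v :=
  (pi_norm_le_iff_of_nonneg (Real.sqrt_nonneg _)).2 fun i => by
    rw [Real.norm_eq_abs, ← Real.sqrt_sq_eq_abs]
    exact Real.sqrt_le_sqrt <|
      Finset.single_le_sum (f := fun i => v i ^ 2) (fun _ _ => sq_nonneg _) (Finset.mem_univ i)

lemma l2_le_sqrt_card_mul_norm {d : ℕ} (v : Fin d → ℝ) : l2 v ≤ √d * ‖v‖ := by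
  rw [l2, ← Real.sqrt_sq (norm_nonneg v), ← Real.sqrt_mul (Nat.cast_nonneg d)]
  refine Real.sqrt_le_sqrt ?_
  calc ∑ i, v i ^ 2 ≤ ∑ _i : Fin d, ‖v‖ ^ 2 := Finset.sum_le_sum fun i _ => by
        rw [← sq_abs, ← Real.norm_eq_abs]
        exact pow_le_pow_left₀ (norm_nonneg _) (norm_le_pi_norm v i) 2
    _ = d * ‖v‖ ^ 2 := by simp

lemma lipschitzOnWith_of_l2_le {d e : ℕ} {f : (Fin d → ℝ) → Fin e → ℝ} {s : Set (Fin d → ℝ)}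
    {C : ℝ} (h : ∀ x ∈ s, ∀ y ∈ s, l2 (f x - f y) ≤ C * l2 (x - y)) :
    LipschitzOnWith (C.toNNReal * NNReal.sqrt d) f s := by
  refine LipschitzOnWith.of_dist_le_mul fun x hx y hy => ?_
  rw [dist_eq_norm, dist_eq_norm, NNReal.coe_mul, Real.coe_sqrt, NNReal.coe_natCast, mul_assoc]
  calc ‖f x - f y‖ ≤ l2 (f x - f y) := norm_le_l2 _
    _ ≤ C * l2 (x - y) := h x hx y hy
    _ ≤ C.toNNReal * l2 (x - y) :=
        mul_le_mul_of_nonneg_right (Real.le_coe_toNNReal C) (Real.sqrt_nonneg _)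
    _ ≤ C.toNNReal * (√d * ‖x - y‖) :=
        mul_le_mul_of_nonneg_left (l2_le_sqrt_card_mul_norm _) C.toNNReal.2

lemma Matrix.exists_lipschitzWith_mulVec {m n : ℕ} (A : Matrix (Fin m) (Fin n) ℝ) :
    ∃ K, LipschitzWith K (A *ᵥ ·) :=
  ⟨_, (LinearMap.toContinuousLinearMap (Matrix.toLin' A)).lipschitz⟩

theorem stmt2_general {D n : ℕ} (M : Set (Fin D → ℝ)) (hMc : IsCompact M)
    (ρ Cφ : ℝ)
    (φ : (Fin D → ℝ) → (Fin n → ℝ)) (ψ : (Fin n → ℝ) → (Fin D → ℝ))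
    (hφup : ∀ v₁ ∈ M, ∀ v₂ ∈ M, l2 (φ v₁ - φ v₂) ≤ Cφ * l2 (v₁ - v₂))
    (hψlip : ∀ u v : Fin n → ℝ, l2 (ψ u - ψ v) ≤ Cφ * l2 (u - v))
    (Astar : Matrix (Fin n) (Fin n) ℝ) (hA : specNorm Astar ≤ ρ)
    (F : (Fin D → ℝ) → (Fin D → ℝ)) (hF : ∀ x ∈ M, F x = ψ (Astar.mulVec (φ x)))
    (ε : ℝ) (hε0 : 0 < ε) :
    ∃ (Enet : ReluNet D n) (Atil : Matrix (Fin n) (Fin n) ℝ) (Dnet : ReluNet n D),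
      specNorm Atil ≤ ρ ∧
      ∀ x ∈ M, ‖Dnet.eval (Atil.mulVec (Enet.eval x)) - F x‖ ≤ ε := by
  have hψ := lipschitzOnWith_univ.1 (lipschitzOnWith_of_l2_le fun u _ v _ => hψlip u v)
  obtain ⟨KA, hKA⟩ := Astar.exists_lipschitzWith_mulVec
  obtain ⟨K, hK⟩ : ∃ K, LipschitzWith K (ψ ∘ (Astar *ᵥ ·)) := ⟨_, hψ.comp hKA⟩
  have hδ : 0 < ε / 2 / (K + 1) := by positivity
  have hKδ : K * (ε / 2 / (K + 1)) ≤ ε / 2 := by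
    calc K * (ε / 2 / (K + 1)) ≤ (K + 1) * (ε / 2 / (K + 1)) := by gcongr; linarith
      _ = ε / 2 := mul_div_cancel₀ _ (by positivity)
  obtain ⟨Enet, hE⟩ :=
    exists_reluNet_approx_of_lipschitzOnWith hMc (lipschitzOnWith_of_l2_le hφup) hδ
  have hT : IsCompact ((fun x => Astar *ᵥ Enet.eval x) '' M) :=
    hMc.image (continuous_const.matrix_mulVec Enet.continuous_eval)
  obtain ⟨Dnet, hD⟩ :=
    exists_reluNet_approx_of_lipschitzOnWith hT hψ.lipschitzOnWith (half_pos hε0)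
  refine ⟨Enet, Astar, Dnet, hA, fun x hx => ?_⟩
  rw [hF x hx]
  calc ‖Dnet.eval (Astar *ᵥ Enet.eval x) - ψ (Astar *ᵥ φ x)‖
      ≤ ‖Dnet.eval (Astar *ᵥ Enet.eval x) - ψ (Astar *ᵥ Enet.eval x)‖
        + ‖ψ (Astar *ᵥ Enet.eval x) - ψ (Astar *ᵥ φ x)‖ := norm_sub_le_norm_sub_add_norm_sub _ _ _
    _ ≤ ε / 2 + K * ‖Enet.eval x - φ x‖ :=
        add_le_add (hD _ (Set.mem_image_of_mem _ hx)) (hK.norm_sub_le _ _)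
    _ ≤ ε / 2 + K * (ε / 2 / (K + 1)) := by gcongr; exact hE x hx
    _ ≤ ε := by linarith

/-- for any `0 < ε < 1` there exist a ReLU network `Ẽ : ℝ^D → ℝ^n`, a matrix
`Ã ∈ ℝ^{n×n}` with spectral norm `‖Ã‖₂ ≤ ρ`, and a ReLU network `D̃ : ℝ^n → ℝ^D` such that
`sup_{x∈M} ‖D̃(Ã Ẽ(x)) − F(x)‖_∞ ≤ ε`.
Here `M ⊂ ℝ^D` is a compact set bounded by `B` in sup norm with a global bi-Lipschitz
parametrization `φ : M → [−Λ,Λ]^n`, `ψ` is a `C_φ`-Lipschitz extension of `φ⁻¹`,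
`A*` has spectral norm at most `ρ ≤ 1` and satisfies `A* φ(M) ⊆ φ(M)`, and
`F(x) = ψ(A* φ(x))`.  (`‖·‖` on `Fin d → ℝ` is the sup norm.) -/
theorem stmt2 {D n : ℕ} (M : Set (Fin D → ℝ)) (hMc : IsCompact M)
    (B Λ ρ Cφ : ℝ) (hρ0 : 0 < ρ) (hρ1 : ρ ≤ 1) (hCφ : 0 < Cφ)
    (hMB : ∀ x ∈ M, ‖x‖ ≤ B)
    (φ : (Fin D → ℝ) → (Fin n → ℝ)) (ψ : (Fin n → ℝ) → (Fin D → ℝ))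
    (hφΛ : ∀ x ∈ M, ∀ i, |φ x i| ≤ Λ)
    (hφlow : ∀ v₁ ∈ M, ∀ v₂ ∈ M, Cφ⁻¹ * l2 (v₁ - v₂) ≤ l2 (φ v₁ - φ v₂))
    (hφup : ∀ v₁ ∈ M, ∀ v₂ ∈ M, l2 (φ v₁ - φ v₂) ≤ Cφ * l2 (v₁ - v₂))
    (hψlip : ∀ u v : Fin n → ℝ, l2 (ψ u - ψ v) ≤ Cφ * l2 (u - v))
    (hψφ : ∀ x ∈ M, ψ (φ x) = x)
    (Astar : Matrix (Fin n) (Fin n) ℝ) (hA : specNorm Astar ≤ ρ)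
    (hAM : ∀ x ∈ M, ∃ x' ∈ M, Astar.mulVec (φ x) = φ x')
    (F : (Fin D → ℝ) → (Fin D → ℝ)) (hF : ∀ x ∈ M, F x = ψ (Astar.mulVec (φ x)))
    (ε : ℝ) (hε0 : 0 < ε) (hε1 : ε < 1) :
    ∃ (Enet : ReluNet D n) (Atil : Matrix (Fin n) (Fin n) ℝ) (Dnet : ReluNet n D),
      specNorm Atil ≤ ρ ∧
      ∀ x ∈ M, ‖Dnet.eval (Atil.mulVec (Enet.eval x)) - F x‖ ≤ ε :=
  stmt2_general M hMc ρ Cφ φ ψ hφup hψlip Astar hA F hF ε hε0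
end
end

section
/- Let M ⊂ ℝ^D be a nonempty set. Let E₁, E₂ : M → ℝ^n be bounded maps with sup_{x∈M} ‖E₂(x)‖_∞ ≤ Λ; let A₁, A₂ ∈ ℝ^{n×n} with spectral norm ‖A₁‖₂ ≤ ρ; and let D₁, D₂ : ℝ^n → ℝ^D be maps such that D₂ satisfies ‖D₂(u) − D₂(v)‖_∞ ≤ C ‖u − v‖₂ for all u, v ∈ ℝ^n. Then sup_{x∈M} ‖D₁(A₁ E₁(x)) − D₂(A₂ E₂(x))‖_∞ ≤ sup_{z∈ℝ^n} ‖D₁(z) − D₂(z)‖_∞ + C ρ √n · sup_{x∈M} ‖E₁(x) − E₂(x)‖_∞ + C n^{3/2} Λ · max_{1≤i,j≤n} |(A₁ − A₂)_{ij}|. -/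
/-!
Split `A₁ E₁ - A₂ E₂ = A₁ (E₁ - E₂) + (A₁ - A₂) E₂`. The first term is controlled in `ℓ²` by the
spectral norm of `A₁`, the second entrywise in the sup norm, at the cost of a factor `n`; passing
from the sup norm to `ℓ²` costs `√n`. The Lipschitz bound on `D₂` then carries the `ℓ²` estimate
to the outputs, and the triangle inequality through `D₂ (A₁ E₁ x)` adds the `D₁`-vs-`D₂` error.
-/

noncomputable section

open Matrix

lemma Real.rpow_three_halves {x : ℝ} (hx : 0 ≤ x) : x ^ (3 / 2 : ℝ) = √x * x := by
  rw [show (3 / 2 : ℝ) = 1 / 2 + 1 by norm_num, Real.rpow_add' hx (by norm_num), Real.rpow_one,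
    Real.sqrt_eq_rpow]

lemma norm_mulVec_le_card_mul {ι : Type*} [Fintype ι] (A : Matrix ι ι ℝ) (v : ι → ℝ) {a b : ℝ}
    (hA : ∀ i j, |A i j| ≤ a) (hv : ‖v‖ ≤ b) : ‖A *ᵥ v‖ ≤ Fintype.card ι * a * b := by
  cases isEmpty_or_nonempty ι
  · simp [Subsingleton.elim (A *ᵥ v) 0]
  obtain ⟨i₀⟩ := ‹Nonempty ι›
  have ha : 0 ≤ a := (abs_nonneg _).trans (hA i₀ i₀)
  have hb : 0 ≤ b := (norm_nonneg v).trans hv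
  refine (pi_norm_le_iff_of_nonneg (by positivity)).2 fun i => ?_
  calc ‖(A *ᵥ v) i‖ = |∑ j, A i j * v j| := rfl
    _ ≤ ∑ j, |A i j| * |v j| := by
        simpa only [abs_mul] using Finset.abs_sum_le_sum_abs (fun j => A i j * v j) Finset.univ
    _ ≤ ∑ _j : ι, a * b := Finset.sum_le_sum fun j _ =>
        mul_le_mul (hA i j) ((norm_le_pi_norm v j).trans hv) (abs_nonneg _) ha
    _ = Fintype.card ι * a * b := by simp [mul_assoc]

section l2

variable {d : ℕ}

lemma l2_eq_norm_toLp (x : Fin d → ℝ) : l2 x = ‖WithLp.toLp 2 x‖ := by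
  simp [l2, EuclideanSpace.norm_eq, sq_abs]

lemma l2_nonneg (x : Fin d → ℝ) : 0 ≤ l2 x := Real.sqrt_nonneg _

lemma l2_eq_zero {x : Fin d → ℝ} : l2 x = 0 ↔ x = 0 := by
  simp [l2_eq_norm_toLp]

lemma l2_add_le (x y : Fin d → ℝ) : l2 (x + y) ≤ l2 x + l2 y := by
  simpa only [l2_eq_norm_toLp, WithLp.toLp_add] using norm_add_le _ _

lemma l2_smul (c : ℝ) (x : Fin d → ℝ) : l2 (c • x) = |c| * l2 x := by
  simp only [l2_eq_norm_toLp, WithLp.toLp_smul, norm_smul, Real.norm_eq_abs]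

lemma l2_le_sqrt_mul_norm (x : Fin d → ℝ) : l2 x ≤ √d * ‖x‖ := by
  rw [l2, ← Real.sqrt_sq (norm_nonneg x), ← Real.sqrt_mul (Nat.cast_nonneg d)]
  gcongr
  calc ∑ i, x i ^ 2 ≤ ∑ _i : Fin d, ‖x‖ ^ 2 := Finset.sum_le_sum fun i _ => by
        simpa [sq_abs] using pow_le_pow_left₀ (abs_nonneg _) (norm_le_pi_norm x i) 2
    _ = d * ‖x‖ ^ 2 := by simp

end l2

section specNorm

variable {n : ℕ}

lemma l2_mulVec_le_norm_toEuclideanCLM (A : Matrix (Fin n) (Fin n) ℝ) (v : Fin n → ℝ) :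
    l2 (A *ᵥ v) ≤ ‖toEuclideanCLM (𝕜 := ℝ) A‖ * l2 v := by
  simpa only [l2_eq_norm_toLp, toEuclideanCLM_toLp] using
    (toEuclideanCLM (𝕜 := ℝ) A).le_opNorm (WithLp.toLp 2 v)

lemma specNorm_bddAbove (A : Matrix (Fin n) (Fin n) ℝ) :
    BddAbove (Set.range fun v : {v : Fin n → ℝ // l2 v ≤ 1} => l2 (A *ᵥ v)) := by
  refine ⟨‖toEuclideanCLM (𝕜 := ℝ) A‖, ?_⟩
  rintro _ ⟨⟨v, hv⟩, rfl⟩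
  exact (l2_mulVec_le_norm_toEuclideanCLM A v).trans (mul_le_of_le_one_right (norm_nonneg _) hv)

lemma specNorm_nonneg (A : Matrix (Fin n) (Fin n) ℝ) : 0 ≤ specNorm A :=
  Real.iSup_nonneg fun _ => l2_nonneg _

lemma l2_mulVec_le_specNorm_mul (A : Matrix (Fin n) (Fin n) ℝ) (w : Fin n → ℝ) :
    l2 (A *ᵥ w) ≤ specNorm A * l2 w := by
  rcases (l2_nonneg w).eq_or_lt with hzero | hpos
  · rw [eq_comm, l2_eq_zero] at hzero
    simp [hzero, l2]
  have hunit : l2 ((l2 w)⁻¹ • w) ≤ 1 := by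
    rw [l2_smul, abs_of_pos (inv_pos.2 hpos), inv_mul_cancel₀ hpos.ne']
  have h := le_ciSup (specNorm_bddAbove A) ⟨_, hunit⟩
  rw [mulVec_smul, l2_smul, abs_of_pos (inv_pos.2 hpos), inv_mul_le_iff₀ hpos] at h
  exact h.trans_eq (mul_comm _ _)

lemma l2_mulVec_sub_mulVec_le (A₁ A₂ : Matrix (Fin n) (Fin n) ℝ) (u₁ u₂ : Fin n → ℝ) {a b : ℝ}
    (hA : ∀ i j, |A₁ i j - A₂ i j| ≤ a) (hu₂ : ‖u₂‖ ≤ b) :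
    l2 (A₁ *ᵥ u₁ - A₂ *ᵥ u₂) ≤ specNorm A₁ * √n * ‖u₁ - u₂‖ + (n : ℝ) ^ (3 / 2 : ℝ) * a * b := by
  have hsplit : A₁ *ᵥ u₁ - A₂ *ᵥ u₂ = A₁ *ᵥ (u₁ - u₂) + (A₁ - A₂) *ᵥ u₂ := by
    rw [mulVec_sub, sub_mulVec]; abel
  have hdiff : ‖(A₁ - A₂) *ᵥ u₂‖ ≤ n * a * b := by
    simpa using norm_mulVec_le_card_mul (A₁ - A₂) u₂ hA hu₂
  calc l2 (A₁ *ᵥ u₁ - A₂ *ᵥ u₂) ≤ l2 (A₁ *ᵥ (u₁ - u₂)) + l2 ((A₁ - A₂) *ᵥ u₂) :=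
        hsplit ▸ l2_add_le _ _
    _ ≤ specNorm A₁ * (√n * ‖u₁ - u₂‖) + √n * (n * a * b) := by
        gcongr
        · exact (l2_mulVec_le_specNorm_mul _ _).trans
            (mul_le_mul_of_nonneg_left (l2_le_sqrt_mul_norm _) (specNorm_nonneg _))
        · exact (l2_le_sqrt_mul_norm _).trans (by gcongr)
    _ = specNorm A₁ * √n * ‖u₁ - u₂‖ + (n : ℝ) ^ (3 / 2 : ℝ) * a * b := by
        rw [Real.rpow_three_halves (Nat.cast_nonneg n)]; ring

end specNorm

theorem stmt5_general {D n : ℕ} (M : Set (Fin D → ℝ))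
    (E₁ E₂ : (Fin D → ℝ) → (Fin n → ℝ))
    (Λ : ℝ) (hE₂ : ∀ x ∈ M, ‖E₂ x‖ ≤ Λ)
    (A₁ A₂ : Matrix (Fin n) (Fin n) ℝ) (ρ : ℝ) (hA₁ : specNorm A₁ ≤ ρ)
    (D₁ D₂ : (Fin n → ℝ) → (Fin D → ℝ)) (C : ℝ) (hC : 0 ≤ C)
    (hD₂ : ∀ u v : Fin n → ℝ, ‖D₂ u - D₂ v‖ ≤ C * l2 (u - v))
    (δD δE δA : ℝ)
    (hδD : ∀ z : Fin n → ℝ, ‖D₁ z - D₂ z‖ ≤ δD)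
    (hδE : ∀ x ∈ M, ‖E₁ x - E₂ x‖ ≤ δE)
    (hδA : ∀ i j, |A₁ i j - A₂ i j| ≤ δA) :
    ∀ x ∈ M, ‖D₁ (A₁.mulVec (E₁ x)) - D₂ (A₂.mulVec (E₂ x))‖
      ≤ δD + C * ρ * Real.sqrt n * δE + C * (n : ℝ) ^ ((3 : ℝ) / 2) * Λ * δA := by
  intro x hx
  have hρ : 0 ≤ ρ := (specNorm_nonneg A₁).trans hA₁
  have hinner : l2 (A₁ *ᵥ E₁ x - A₂ *ᵥ E₂ x) ≤ ρ * √n * δE + (n : ℝ) ^ (3 / 2 : ℝ) * δA * Λ := by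
    refine (l2_mulVec_sub_mulVec_le A₁ A₂ _ _ hδA (hE₂ x hx)).trans ?_
    gcongr
    exact hδE x hx
  calc ‖D₁ (A₁ *ᵥ E₁ x) - D₂ (A₂ *ᵥ E₂ x)‖
        ≤ ‖D₁ (A₁ *ᵥ E₁ x) - D₂ (A₁ *ᵥ E₁ x)‖ + ‖D₂ (A₁ *ᵥ E₁ x) - D₂ (A₂ *ᵥ E₂ x)‖ :=
        norm_sub_le_norm_sub_add_norm_sub _ _ _
    _ ≤ δD + C * (ρ * √n * δE + (n : ℝ) ^ (3 / 2 : ℝ) * δA * Λ) :=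
        add_le_add (hδD _) ((hD₂ _ _).trans (mul_le_mul_of_nonneg_left hinner hC))
    _ = δD + C * ρ * Real.sqrt n * δE + C * (n : ℝ) ^ ((3 : ℝ) / 2) * Λ * δA := by ring

/-- a perturbation bound for composites `x ↦ D(A E(x))`.
The suprema on the right-hand side of the informal statement are expressed via
arbitrary finite upper bounds `δD, δE, δA` of the corresponding quantities; the
conclusion bounds the composite difference uniformly on `M` by
`δD + C ρ √n δE + C n^{3/2} Λ δA`.  (`‖·‖` on `Fin d → ℝ` is the sup norm.) -/
theorem stmt5 {D n : ℕ} (M : Set (Fin D → ℝ)) (hM : M.Nonempty)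
    (E₁ E₂ : (Fin D → ℝ) → (Fin n → ℝ))
    (hE₁bdd : ∃ c : ℝ, ∀ x ∈ M, ‖E₁ x‖ ≤ c)
    (Λ : ℝ) (hΛ : 0 ≤ Λ) (hE₂ : ∀ x ∈ M, ‖E₂ x‖ ≤ Λ)
    (A₁ A₂ : Matrix (Fin n) (Fin n) ℝ) (ρ : ℝ) (hρ : 0 ≤ ρ) (hA₁ : specNorm A₁ ≤ ρ)
    (D₁ D₂ : (Fin n → ℝ) → (Fin D → ℝ)) (C : ℝ) (hC : 0 ≤ C)
    (hD₂ : ∀ u v : Fin n → ℝ, ‖D₂ u - D₂ v‖ ≤ C * l2 (u - v))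
    (δD δE δA : ℝ)
    (hδD : ∀ z : Fin n → ℝ, ‖D₁ z - D₂ z‖ ≤ δD)
    (hδE : ∀ x ∈ M, ‖E₁ x - E₂ x‖ ≤ δE)
    (hδA : ∀ i j, |A₁ i j - A₂ i j| ≤ δA) :
    ∀ x ∈ M, ‖D₁ (A₁.mulVec (E₁ x)) - D₂ (A₂.mulVec (E₂ x))‖
      ≤ δD + C * ρ * Real.sqrt n * δE + C * (n : ℝ) ^ ((3 : ℝ) / 2) * Λ * δA :=
  stmt5_general M E₁ E₂ Λ hE₂ A₁ A₂ ρ hA₁ D₁ D₂ C hC hD₂ δD δE δA hδD hδE hδA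

end
end
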